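/- Let Ω ⊂ ℍₛⁿ be open in the Euclidean (subspace) topology τ(ℍₛⁿ) and a slice-domain with Ω ∩ ℝⁿ ≠ ∅. Then Ω is self-stem-preserving, i.e., Ω is real-path-connected and Ω-stem-preserving: (i) for every γ ∈ 𝒫(ℂⁿ, Ω), |𝕊(Ω, γ)| ≥ 2; (ii) for all α, β ∈ 𝒫(ℂⁿ, Ω) with α(1) = β(1), |𝕊(Ω, α) ∩ 𝕊(Ω, β)| ≠ 1. -/

import Mathlib

noncomputable section
open Quaternion Matrix

abbrev Hq := Quaternion ℝ

/-- The set of quaternionic imaginary units. -/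
def Sph : Set Hq := {I | I ^ 2 = -1}

/-- `Ψ_i^I` applied to a single complex number: `x + y i ↦ x + y I`. -/
def psi (I : Hq) (z : ℂ) : Hq := (z.re : Hq) + z.im • I

/-- `Ψ_i^I : ℂⁿ → ℂ_Iⁿ`, componentwise. -/
def liftMap {n : ℕ} (I : Hq) (z : Fin n → ℂ) : Fin n → Hq := fun k => psi I (z k)

/-- The weakly slice cone `Hqₛⁿ = ⋃_{I∈𝕊} ℂ_Iⁿ`. -/
def HSn (n : ℕ) : Set (Fin n → Hq) := {q | ∃ I ∈ Sph, ∃ z : Fin n → ℂ, q = liftMap I z}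

/-- A point of `ℂⁿ` is real. -/
def isRealPt {n : ℕ} (z : Fin n → ℂ) : Prop := ∀ k, (z k).im = 0

/-- A point of `Hqⁿ` is real. -/
def isRealH {n : ℕ} (q : Fin n → Hq) : Prop := ∀ k, q k = ((q k).re : Hq)

/-- The lifted path `γ^I = Ψ_i^I ∘ γ`. -/
def liftP {n : ℕ} (γ : C(unitInterval, Fin n → ℂ)) (I : Hq) (t : unitInterval) : Fin n → Hq :=
  liftMap I (γ t)

/-- `𝕊(Ω, γ) = {I ∈ 𝕊 : γ^I ⊂ Ω}`. -/
def SUnits {n : ℕ} (Ω : Set (Fin n → Hq)) (γ : C(unitInterval, Fin n → ℂ)) : Set Hq :=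
  {I | I ∈ Sph ∧ ∀ t, liftP γ I t ∈ Ω}

/-- `𝒫(ℂⁿ, Ω)`: continuous paths starting in `ℝⁿ` with some lift inside `Ω`. -/
def PathsTo {n : ℕ} (Ω : Set (Fin n → Hq)) : Set C(unitInterval, Fin n → ℂ) :=
  {γ | isRealPt (γ 0) ∧ ∃ I, I ∈ SUnits Ω γ}

/-- `F` is a path-slice stem function of `f` on `Ω`:
`f(γ^I(1)) = (1, I)·F(γ)`. -/
def IsStem {n : ℕ} (Ω : Set (Fin n → Hq)) (f : (Fin n → Hq) → Hq)
    (F : C(unitInterval, Fin n → ℂ) → Fin 2 → Hq) : Prop :=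
  ∀ γ ∈ PathsTo Ω, ∀ I ∈ SUnits Ω γ, f (liftP γ I 1) = F γ 0 + I * F γ 1

/-- `f` is path-slice on `Ω`. -/
def IsPathSlice {n : ℕ} (Ω : Set (Fin n → Hq)) (f : (Fin n → Hq) → Hq) : Prop :=
  ∃ F, IsStem Ω f F

/-- `Ω` is real-path-connected. -/
def RealPathConnected {n : ℕ} (Ω : Set (Fin n → Hq)) : Prop :=
  ∀ q ∈ Ω, ∃ γ ∈ PathsTo Ω, ∃ I ∈ SUnits Ω γ, liftP γ I 1 = q

/-- `Ω₂` is `Ω₁`-stem-preserving: (i) every path of `𝒫(ℂⁿ,Ω₁)` has at least two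
units in `𝕊(Ω₂,γ)`; (ii) two paths with the same endpoint share `≠ 1` units. -/
def StemPreserving {n : ℕ} (Ω₁ Ω₂ : Set (Fin n → Hq)) : Prop :=
  (∀ γ ∈ PathsTo Ω₁, ∃ I ∈ SUnits Ω₂ γ, ∃ J ∈ SUnits Ω₂ γ, I ≠ J) ∧
  (∀ α ∈ PathsTo Ω₁, ∀ β ∈ PathsTo Ω₁, α 1 = β 1 →
    ∀ I ∈ SUnits Ω₂ α ∩ SUnits Ω₂ β, ∃ J ∈ SUnits Ω₂ α ∩ SUnits Ω₂ β, J ≠ I)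

/-- The formula `((1,I),(1,J))⁻¹ (f(γ^I(1)), f(γ^J(1)))ᵀ`. -/
def stemFormula {n : ℕ} (f : (Fin n → Hq) → Hq) (γ : C(unitInterval, Fin n → ℂ)) (I J : Hq) :
    Fin 2 → Hq :=
  ((I - J)⁻¹ • !![I, -J; (1 : Hq), -1]).mulVec ![f (liftP γ I 1), f (liftP γ J 1)]

/-- The sub-stem function `F_{Ω₁}^f` (depends only on `Ω₂` and `f`). -/
noncomputable def subStem {n : ℕ} (Ω₂ : Set (Fin n → Hq)) (f : (Fin n → Hq) → Hq)
    (γ : C(unitInterval, Fin n → ℂ)) : Fin 2 → Hq := by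
  classical
  exact if h : ∃ p : Hq × Hq, p.1 ∈ SUnits Ω₂ γ ∧ p.2 ∈ SUnits Ω₂ γ ∧ p.1 ≠ p.2
    then stemFormula f γ h.choose.1 h.choose.2
    else 0

/-- Normalized imaginary part of a quaternion. -/
def imUnit (a : Hq) : Hq := (‖a - (a.re : Hq)‖)⁻¹ • (a - (a.re : Hq))

/-- The map `𝔍 : Hqₛⁿ → 𝕊 ∪ {0}`. -/
noncomputable def Jmap {n : ℕ} (q : Fin n → Hq) : Hq := by
  classical
  exact if h : ∃ k : Fin n, q k ≠ ((q k).re : Hq) then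
    imUnit (q ((Finset.univ.filter fun k => q k ≠ ((q k).re : Hq)).min'
      ⟨h.choose, Finset.mem_filter.2 ⟨Finset.mem_univ _, h.choose_spec⟩⟩))
  else 0

/-- Componentwise complex conjugate of a path. -/
def conjPath {n : ℕ} (γ : C(unitInterval, Fin n → ℂ)) : C(unitInterval, Fin n → ℂ) :=
  ⟨fun t k => star (γ t k),
    continuous_pi fun k => continuous_star.comp ((continuous_apply k).comp γ.continuous)⟩

/-- The point-form sub-stem function `ℱ_{Ω₁}^f : Ω₁ → Hq^{2×1}`. -/
noncomputable def pointStem {n : ℕ} (Ω₁ Ω₂ : Set (Fin n → Hq)) (f : (Fin n → Hq) → Hq)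
    (q : Fin n → Hq) : Fin 2 → Hq := by
  classical
  exact if isRealH q then ![f q, 0]
    else if h : ∃ γ, γ ∈ PathsTo Ω₁ ∧ (∀ t, liftP γ (Jmap q) t ∈ Ω₁) ∧ liftP γ (Jmap q) 1 = q
    then subStem Ω₂ f h.choose
    else 0

/-- The `*`-product of functions: `(f*g)(q) = (f(q), 𝔍(q)f(q)) · ℱ_{Ω₁}^g(q)`. -/
noncomputable def starProd {n : ℕ} (Ω₁ Ω₂ : Set (Fin n → Hq)) (f g : (Fin n → Hq) → Hq)
    (q : Fin n → Hq) : Hq :=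
  f q * pointStem Ω₁ Ω₂ g q 0 + (Jmap q * f q) * pointStem Ω₁ Ω₂ g q 1

/-- The `*`-product on `Hq^{2×1}` coming from `Hq ⊗_ℝ ℂ`. -/
def vstar (p q : Fin 2 → Hq) : Fin 2 → Hq :=
  ![p 0 * q 0 - p 1 * q 1, p 1 * q 0 + p 0 * q 1]

/-- `Ω` is slice-open: a subset of `Hqₛⁿ` all of whose slices are open. -/
def SliceOpen {n : ℕ} (Ω : Set (Fin n → Hq)) : Prop :=
  Ω ⊆ HSn n ∧ ∀ I ∈ Sph, IsOpen {z : Fin n → ℂ | liftMap I z ∈ Ω}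

/-- `Ω` is slice-connected. -/
def SliceConnected {n : ℕ} (Ω : Set (Fin n → Hq)) : Prop :=
  ∀ U V : Set (Fin n → Hq), SliceOpen U → SliceOpen V → Ω ⊆ U ∪ V →
    (Ω ∩ U).Nonempty → (Ω ∩ V).Nonempty → (Ω ∩ U ∩ V).Nonempty

/-- `Ω` is a slice-domain. -/
def SliceDomain {n : ℕ} (Ω : Set (Fin n → Hq)) : Prop :=
  SliceOpen Ω ∧ SliceConnected Ω

/-- `Ω` is self-stem-preserving. -/
def SelfStemPreserving {n : ℕ} (Ω : Set (Fin n → Hq)) : Prop :=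
  RealPathConnected Ω ∧ StemPreserving Ω Ω

/-- `Ω` is open in the Euclidean subspace topology of `Hqₛⁿ`. -/
def EuclideanOpenIn {n : ℕ} (Ω : Set (Fin n → Hq)) : Prop :=
  ∃ U : Set (Fin n → Hq), IsOpen U ∧ Ω = U ∩ HSn n

/-- `Ω` is weakly axially symmetric. -/
def WeaklyAxiallySymmetric {n : ℕ} (Ω : Set (Fin n → Hq)) : Prop :=
  ∀ (x y : Fin n → ℝ) (I : Hq), I ∈ Sph →
    (fun k => (x k : Hq) + y k • I) ∈ Ω → (fun k => (x k : Hq) - y k • I) ∈ Ω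

/-! Stem preservation: as `Ω` is the trace on `ℍₛⁿ` of a Euclidean open set and `[0, 1]` is
compact, `𝕊(Ω, γ)` is a neighbourhood in `𝕊` of each of its points, and `𝕊 ≅ S²` has no isolated
points.

Real-path-connectedness: in each slice `ℂ_Jⁿ` of `Ω`, the points reachable from `ℝⁿ` form a
union of path components of an open set, so both they and the rest of `Ω` are slice-open, and
slice-connectedness forces them to fill `Ω` once `Ω` meets `ℝⁿ`. A non-real point of `ℂ_Jⁿ`
lies in `ℂ_Iⁿ` only for `I = ±J`, and a path lifted by `-J` is a conjugate path lifted by `J`, so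
reachability does not depend on the slice through which a point is seen. -/

open scoped Topology
open Filter

lemma mem_sph_iff {I : Hq} : I ∈ Sph ↔ I.re = 0 ∧ I.imI ^ 2 + I.imJ ^ 2 + I.imK ^ 2 = 1 := by
  rw [Sph, Set.mem_ofPred_eq, sq]
  constructor
  · intro h
    have hre := congrArg QuaternionAlgebra.re h
    have hi := congrArg QuaternionAlgebra.imI h
    have hj := congrArg QuaternionAlgebra.imJ h
    have hk := congrArg QuaternionAlgebra.imK h
    simp at hre hi hj hk
    have h0 : I.re = 0 := by nlinarith [sq_nonneg I.imI, sq_nonneg I.imJ, sq_nonneg I.imK]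
    exact ⟨h0, by nlinarith⟩
  · rintro ⟨h0, h1⟩
    ext <;> simp [h0] <;> nlinarith

lemma norm_eq_one_of_mem_sph {I : Hq} (hI : I ∈ Sph) : ‖I‖ = 1 := by
  have h : ‖I‖ ^ 2 = 1 := by rw [← norm_pow, hI, norm_neg, norm_one]
  exact (pow_eq_one_iff_of_nonneg (norm_nonneg I) two_ne_zero).1 h

def imagQuaternion (v : EuclideanSpace ℝ (Fin 3)) : Hq :=
  Quaternion.linearIsometryEquivTuple.symm !₂[0, v 0, v 1, v 2]

lemma sph_eq_image_sphere : Sph = imagQuaternion '' Metric.sphere 0 1 := by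
  ext I
  simp only [Set.mem_image, mem_sphere_zero_iff_norm, mem_sph_iff]
  constructor
  · rintro ⟨h0, h1⟩
    refine ⟨!₂[I.imI, I.imJ, I.imK], ?_, ?_⟩
    · rw [← pow_eq_one_iff_of_nonneg (norm_nonneg _) two_ne_zero, EuclideanSpace.real_norm_sq_eq]
      simpa [Fin.sum_univ_three] using h1
    · ext <;> simp [imagQuaternion, h0]
  · rintro ⟨v, hv, rfl⟩
    have := EuclideanSpace.real_norm_sq_eq v
    rw [hv, Fin.sum_univ_three] at this
    simp [imagQuaternion]
    linarith

lemma isPreconnected_sph : IsPreconnected Sph := by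
  have hrank : 1 < Module.rank ℝ (EuclideanSpace ℝ (Fin 3)) := by
    rw [← Module.finrank_eq_rank, finrank_euclideanSpace_fin]
    norm_num
  rw [sph_eq_image_sphere]
  exact (isPreconnected_sphere hrank 0 1).image _ (by unfold imagQuaternion; fun_prop)

lemma sph_nontrivial : Sph.Nontrivial := by
  rw [sph_eq_image_sphere]
  refine ⟨imagQuaternion (EuclideanSpace.single 0 1), ⟨_, by simp, rfl⟩,
    imagQuaternion (EuclideanSpace.single 1 1), ⟨_, by simp, rfl⟩, fun h => ?_⟩
  simpa [imagQuaternion] using congrArg QuaternionAlgebra.imI h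

lemma exists_ne_of_mem_nhdsWithin_sph {I : Hq} {s : Set Hq} (hI : I ∈ Sph)
    (hs : s ∈ 𝓝[Sph] I) : ∃ J ∈ s, J ≠ I := by
  have hacc : (𝓝[Sph \ {I}] I).NeBot := accPt_principal_iff_nhdsWithin.1 <|
    isPreconnected_sph.preperfect_of_nontrivial sph_nontrivial I hI
  obtain ⟨J, hJs, -, hJI⟩ :=
    hacc.nonempty_of_mem (inter_mem (nhdsWithin_mono _ Set.sdiff_subset hs) self_mem_nhdsWithin)
  exact ⟨J, hJs, hJI⟩

lemma continuous_liftMap {n : ℕ} : Continuous fun p : Hq × (Fin n → ℂ) => liftMap p.1 p.2 := by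
  have := Quaternion.continuous_coe
  unfold liftMap psi
  fun_prop

lemma sUnits_mem_nhdsWithin {n : ℕ} {Ω : Set (Fin n → Hq)} (hE : EuclideanOpenIn Ω)
    {γ : C(unitInterval, Fin n → ℂ)} {I : Hq} (hI : I ∈ SUnits Ω γ) : SUnits Ω γ ∈ 𝓝[Sph] I := by
  obtain ⟨U, hU, rfl⟩ := hE
  have hcont : Continuous fun p : Hq × unitInterval => liftP γ p.1 p.2 :=
    continuous_liftMap.comp (continuous_fst.prodMk (γ.continuous.comp continuous_snd))
  have hnear : ∀ᶠ J in 𝓝 I, ∀ t ∈ Set.univ, liftP γ J t ∈ U :=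
    isCompact_univ.eventually_forall_of_forall_eventually fun t _ =>
      hcont.continuousAt.eventually_mem (hU.mem_nhds (hI.2 t).1)
  filter_upwards [nhdsWithin_le_nhds hnear, self_mem_nhdsWithin] with J hJU hJ
  exact ⟨hJ, fun t => ⟨hJU t trivial, J, hJ, γ t, rfl⟩⟩

lemma EuclideanOpenIn.stemPreserving {n : ℕ} {Ω₁ Ω₂ : Set (Fin n → Hq)}
    (hE : EuclideanOpenIn Ω₂) (hΩ : Ω₁ ⊆ Ω₂) : StemPreserving Ω₁ Ω₂ := by
  refine ⟨fun γ ⟨_, I, hIS, hIΩ⟩ => ?_, fun α _ β _ _ I hI => ?_⟩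
  · have hI : I ∈ SUnits Ω₂ γ := ⟨hIS, fun t => hΩ (hIΩ t)⟩
    obtain ⟨J, hJ, hJI⟩ := exists_ne_of_mem_nhdsWithin_sph hIS (sUnits_mem_nhdsWithin hE hI)
    exact ⟨I, hI, J, hJ, hJI.symm⟩
  · exact exists_ne_of_mem_nhdsWithin_sph hI.1.1
      (inter_mem (sUnits_mem_nhdsWithin hE hI.1) (sUnits_mem_nhdsWithin hE hI.2))

lemma eq_or_eq_neg_of_smul_eq_smul {I J : Hq} (hI : I ∈ Sph) (hJ : J ∈ Sph) {a b : ℝ}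
    (hb : b ≠ 0) (h : a • I = b • J) : I = J ∨ I = -J := by
  have habs : |a| = |b| := by
    simpa [norm_smul, norm_eq_one_of_mem_sph hI, norm_eq_one_of_mem_sph hJ] using congrArg norm h
  rcases abs_eq_abs.1 habs with rfl | rfl
  · exact Or.inl (smul_right_injective Hq hb h)
  · exact Or.inr (smul_right_injective Hq hb (by simpa [neg_smul, neg_eq_iff_eq_neg] using h))

lemma psi_eq_psi_iff {I J : Hq} (hI : I ∈ Sph) (hJ : J ∈ Sph) {w z : ℂ} :
    psi I w = psi J z ↔ w.re = z.re ∧ w.im • I = z.im • J := by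
  refine ⟨fun h => ?_, fun ⟨hre, him⟩ => by rw [psi, psi, hre, him]⟩
  have hre : w.re = z.re := by
    simpa [psi, Quaternion.re_smul, (mem_sph_iff.1 hI).1, (mem_sph_iff.1 hJ).1]
      using congrArg QuaternionAlgebra.re h
  exact ⟨hre, by simpa [psi, hre] using h⟩

lemma liftMap_star {n : ℕ} (J : Hq) (z : Fin n → ℂ) : liftMap J (star z) = liftMap (-J) z := by
  funext k
  simp [liftMap, psi]

lemma liftMap_eq_liftMap {n : ℕ} {I J : Hq} (hI : I ∈ Sph) (hJ : J ∈ Sph) {w z : Fin n → ℂ}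
    (h : liftMap I w = liftMap J z) (hz : ¬ isRealPt z) :
    (I = J ∧ w = z) ∨ (I = -J ∧ w = star z) := by
  have hk : ∀ k, (w k).re = (z k).re ∧ (w k).im • I = (z k).im • J := fun k =>
    (psi_eq_psi_iff hI hJ).1 (congrFun h k)
  have hJ0 : J ≠ 0 := norm_ne_zero_iff.1 (by simp [norm_eq_one_of_mem_sph hJ])
  obtain ⟨k₀, hk₀⟩ : ∃ k, (z k).im ≠ 0 := by simpa [isRealPt] using hz
  rcases eq_or_eq_neg_of_smul_eq_smul hI hJ hk₀ (hk k₀).2 with rfl | rfl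
  · refine Or.inl ⟨rfl, funext fun k => Complex.ext (hk k).1 (smul_left_injective ℝ hJ0 (hk k).2)⟩
  · refine Or.inr ⟨rfl, funext fun k => Complex.ext (by simpa using (hk k).1) ?_⟩
    have := (hk k).2
    simp only [smul_neg, ← neg_smul] at this
    simpa [neg_eq_iff_eq_neg] using smul_left_injective ℝ hJ0 this

lemma isOpen_diff_biUnion_pathComponentIn {X : Type*} [TopologicalSpace X]
    [LocallyPathConnectedSpace X] {F : Set X} (hF : IsOpen F) (S : Set X) :
    IsOpen (F \ ⋃ x ∈ S, pathComponentIn F x) := by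
  refine isOpen_iff_mem_nhds.2 fun y ⟨hyF, hyS⟩ => ?_
  refine mem_of_superset ((hF.pathComponentIn y).mem_nhds (mem_pathComponentIn_self hyF))
    fun z hz => ⟨pathComponentIn_subset hz, ?_⟩
  simp only [Set.mem_iUnion] at hyS ⊢
  rintro ⟨x, hx, hxz⟩
  exact hyS ⟨x, hx, hxz.trans hz.symm⟩

lemma SliceConnected.subset_of_sliceOpen {n : ℕ} {Ω A : Set (Fin n → Hq)}
    (hΩ : SliceConnected Ω) (hA : SliceOpen A) (hB : SliceOpen (Ω \ A))
    (hΩA : (Ω ∩ A).Nonempty) : Ω ⊆ A := by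
  by_contra hsub
  obtain ⟨q, hqΩ, hqA⟩ := Set.not_subset.1 hsub
  obtain ⟨x, ⟨-, -, hxA'⟩, hxA⟩ :=
    hΩ (Ω \ A) A hB hA (Set.subset_sdiff_union Ω A) ⟨q, hqΩ, hqΩ, hqA⟩ hΩA
  exact hxA' hxA

def realReachable {n : ℕ} (Ω : Set (Fin n → Hq)) : Set (Fin n → Hq) :=
  {q | ∃ γ ∈ PathsTo Ω, ∃ I ∈ SUnits Ω γ, liftP γ I 1 = q}

section RealReachable

variable {n : ℕ} {Ω : Set (Fin n → Hq)}

lemma realReachable_subset : realReachable Ω ⊆ Ω := by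
  rintro q ⟨γ, -, I, hI, rfl⟩
  exact hI.2 1

lemma joinedIn_of_mem_sUnits {γ : C(unitInterval, Fin n → ℂ)} {I : Hq} (hI : I ∈ SUnits Ω γ) :
    JoinedIn (liftMap I ⁻¹' Ω) (γ 0) (γ 1) :=
  ⟨⟨γ, rfl, rfl⟩, hI.2⟩

lemma JoinedIn.star_preimage_liftMap {J : Hq} {x y : Fin n → ℂ}
    (h : JoinedIn (liftMap (-J) ⁻¹' Ω) x y) : JoinedIn (liftMap J ⁻¹' Ω) (star x) (star y) := by
  refine (h.map continuous_star).mono ?_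
  rintro _ ⟨z, hz, rfl⟩
  rwa [Set.mem_preimage, liftMap_star]

lemma liftMap_mem_realReachable {J : Hq} (hJ : J ∈ Sph) {x z : Fin n → ℂ} (hx : isRealPt x)
    (h : JoinedIn (liftMap J ⁻¹' Ω) x z) : liftMap J z ∈ realReachable Ω := by
  obtain ⟨γ, hγ⟩ := h
  have hJγ : J ∈ SUnits Ω γ.toContinuousMap := ⟨hJ, hγ⟩
  exact ⟨γ.toContinuousMap, ⟨by simpa using hx, J, hJγ⟩, J, hJγ, by simp [liftP]⟩

lemma exists_joinedIn_of_liftMap_mem_realReachable {J : Hq} (hJ : J ∈ Sph) {z : Fin n → ℂ}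
    (h : liftMap J z ∈ realReachable Ω) : ∃ x, isRealPt x ∧ JoinedIn (liftMap J ⁻¹' Ω) x z := by
  by_cases hz : isRealPt z
  · exact ⟨z, hz, JoinedIn.refl (realReachable_subset h)⟩
  obtain ⟨γ, ⟨hγ0, -⟩, I, hI, hγI⟩ := h
  rcases liftMap_eq_liftMap hI.1 hJ hγI hz with ⟨rfl, hγ1⟩ | ⟨rfl, hγ1⟩
  · exact ⟨γ 0, hγ0, hγ1 ▸ joinedIn_of_mem_sUnits hI⟩
  · refine ⟨star (γ 0), fun k => by simp [hγ0 k], ?_⟩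
    simpa [hγ1] using (joinedIn_of_mem_sUnits hI).star_preimage_liftMap

lemma preimage_liftMap_realReachable {J : Hq} (hJ : J ∈ Sph) :
    liftMap J ⁻¹' realReachable Ω =
      ⋃ x ∈ {x | isRealPt x}, pathComponentIn (liftMap J ⁻¹' Ω) x := by
  ext z
  simp only [Set.mem_preimage, Set.mem_iUnion, exists_prop]
  exact ⟨exists_joinedIn_of_liftMap_mem_realReachable hJ,
    fun ⟨x, hx, hxz⟩ => liftMap_mem_realReachable hJ hx hxz⟩

lemma mem_realReachable_of_isRealH {q : Fin n → Hq} (hq : q ∈ Ω) (hreal : isRealH q) :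
    q ∈ realReachable Ω := by
  obtain ⟨J, hJ, -⟩ := sph_nontrivial
  have hlift : liftMap J (fun k => ((q k).re : ℂ)) = q := by
    funext k
    simpa [liftMap, psi] using (hreal k).symm
  rw [← hlift] at hq ⊢
  exact liftMap_mem_realReachable hJ (fun k => Complex.ofReal_im _) (JoinedIn.refl hq)

lemma sliceOpen_realReachable (hΩ : SliceOpen Ω) : SliceOpen (realReachable Ω) := by
  refine ⟨realReachable_subset.trans hΩ.1, fun J hJ => ?_⟩
  change IsOpen (liftMap J ⁻¹' realReachable Ω)
  rw [preimage_liftMap_realReachable hJ]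
  exact isOpen_biUnion fun x _ => (hΩ.2 J hJ).pathComponentIn x

lemma sliceOpen_diff_realReachable (hΩ : SliceOpen Ω) : SliceOpen (Ω \ realReachable Ω) := by
  refine ⟨Set.sdiff_subset.trans hΩ.1, fun J hJ => ?_⟩
  change IsOpen (liftMap J ⁻¹' (Ω \ realReachable Ω))
  rw [Set.preimage_sdiff, preimage_liftMap_realReachable hJ]
  exact isOpen_diff_biUnion_pathComponentIn (hΩ.2 J hJ) _

lemma SliceDomain.realPathConnected (hΩ : SliceDomain Ω) (hR : ∃ q ∈ Ω, isRealH q) :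
    RealPathConnected Ω := by
  obtain ⟨q, hq, hqR⟩ := hR
  exact fun _ hp => hΩ.2.subset_of_sliceOpen (sliceOpen_realReachable hΩ.1)
    (sliceOpen_diff_realReachable hΩ.1) ⟨q, hq, mem_realReachable_of_isRealH hq hqR⟩ hp

end RealReachable

/-- a Euclidean-open slice-domain meeting `ℝⁿ` is
self-stem-preserving. -/
theorem euclideanOpen_sliceDomain_selfStemPreserving {n : ℕ} (Ω : Set (Fin n → Hq))
    (hE : EuclideanOpenIn Ω) (hΩ : SliceDomain Ω) (hR : ∃ q ∈ Ω, isRealH q) :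
    SelfStemPreserving Ω :=
  ⟨hΩ.realPathConnected hR, hE.stemPreserving subset_rfl⟩
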